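/- Let G be the directed cycle on n vertices in which every edge has weight 1 − K/n, where 0 < K ≤ n, and let the thresholds θ_v be independent Uniform[0,1] random variables. In the linear influence model, the fractional influence vector assigning x_v = K/n to every vertex v yields expected final activated set size E_θ[|S_n^θ|] = n(1 − (1 − K/n)^n). -/

import Mathlib

/-!
If some threshold satisfies `θ v₀ ≤ K/n`, then `v₀` activates in the first round, and each
activated vertex `v` pushes its successor over the threshold, since
`w(v, v+1) + x = (1 - K/n) + K/n = 1 ≥ θ`; going once around the cycle activates everything.
Otherwise no vertex ever activates. Hence `|S_n^θ| = n · 1[∃ v, θ v ≤ K/n]`, whose expectation is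
`n (1 - P(∀ v, θ v > K/n)) = n (1 - (1 - K/n)^n)`.
-/

open MeasureTheory Finset
open scoped Classical

/-- The final activated set of the linear influence process on a weighted digraph
with weights `wt`, thresholds `θ` and direct influences `x`: starting from `∅`, a
vertex `v` activates once the total weight of edges from the active set into `v`
plus `x v` reaches `θ v`; the process runs for `|W|` rounds. -/
noncomputable def finalSet {W : Type*} [Fintype W] (wt : W → W → ℝ) (θ x : W → ℝ) :
    Finset W :=
  (fun S => S ∪ Finset.univ.filter (fun v => θ v ≤ (∑ u ∈ S, wt u v) + x v))^[Fintype.card W] ∅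

/-- The expected size of the final activated set of the linear influence process,
the thresholds being i.i.d. `Uniform [0,1]`. -/
noncomputable def sigmaLin {W : Type*} [Fintype W] (wt : W → W → ℝ) (x : W → ℝ) : ℝ :=
  ∫ θ : W → ℝ, ((finalSet wt θ x).card : ℝ)
    ∂(Measure.pi fun _ : W => volume.restrict (Set.Icc 0 1))

section Activation

variable {W : Type*} [Fintype W] (wt : W → W → ℝ) (θ x : W → ℝ)

noncomputable def activationStep (S : Finset W) : Finset W :=
  S ∪ univ.filter fun v => θ v ≤ (∑ u ∈ S, wt u v) + x v

theorem finalSet_eq_iterate_activationStep :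
    finalSet wt θ x = (activationStep wt θ x)^[Fintype.card W] ∅ := rfl

theorem monotone_iterate_activationStep :
    Monotone fun m => (activationStep wt θ x)^[m] ∅ :=
  monotone_nat_of_le_succ fun m => by
    rw [Function.iterate_succ_apply']
    exact subset_union_left

theorem finalSet_eq_empty (h : ∀ v, x v < θ v) : finalSet wt θ x = ∅ := by
  have hfix : activationStep wt θ x ∅ = ∅ := by
    simpa [activationStep, filter_eq_empty_iff] using h
  rw [finalSet_eq_iterate_activationStep, Function.iterate_fixed hfix]

theorem mem_activationStep_of_mem {S : Finset W} {u w : W} (hwt : ∀ u', 0 ≤ wt u' w)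
    (hu : u ∈ S) (h : θ w ≤ wt u w + x w) : w ∈ activationStep wt θ x S := by
  refine mem_union_right _ (mem_filter.2 ⟨mem_univ _, h.trans ?_⟩)
  gcongr
  exact single_le_sum (fun u' _ => hwt u') hu

theorem iterate_mem_iterate_activationStep (next : W → W) (hwt : ∀ u v, 0 ≤ wt u v)
    (hnext : ∀ v, θ (next v) ≤ wt v (next v) + x (next v)) {v₀ : W} (hv₀ : θ v₀ ≤ x v₀)
    (j : ℕ) : next^[j] v₀ ∈ (activationStep wt θ x)^[j + 1] ∅ := by
  induction j with
  | zero => simpa [activationStep] using hv₀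
  | succ j ih =>
    rw [Function.iterate_succ_apply' next, Function.iterate_succ_apply']
    exact mem_activationStep_of_mem wt θ x (hwt · _) ih (hnext _)

theorem finalSet_eq_univ_of_chain (next : W → W) (hwt : ∀ u v, 0 ≤ wt u v)
    (hnext : ∀ v, θ (next v) ≤ wt v (next v) + x (next v)) {v₀ : W} (hv₀ : θ v₀ ≤ x v₀)
    (hreach : ∀ v, ∃ j < Fintype.card W, next^[j] v₀ = v) : finalSet wt θ x = univ := by
  refine eq_univ_of_forall fun v => ?_
  obtain ⟨j, hj, rfl⟩ := hreach v
  exact monotone_iterate_activationStep wt θ x hj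
    (iterate_mem_iterate_activationStep wt θ x next hwt hnext hv₀ j)

end Activation

section Cycle

variable {n : ℕ} [NeZero n]

open Fin.NatCast in
theorem Fin.exists_iterate_add_one_eq (a b : Fin n) : ∃ j < n, (· + 1)^[j] a = b :=
  ⟨(b - a).val, (b - a).isLt, by
    rw [add_right_iterate, nsmul_one, Fin.cast_val_eq_self]
    exact add_sub_cancel a b⟩

theorem Fin.val_add_one_eq_mod (v : Fin n) : ((v + 1 : Fin n) : ℕ) = ((v : ℕ) + 1) % n := by
  rw [Fin.val_add, Fin.val_one', Nat.add_mod_mod]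

def cycleWeight (n : ℕ) (c : ℝ) (u v : Fin n) : ℝ :=
  if ((u : ℕ) + 1) % n = (v : ℕ) then c else 0

theorem card_finalSet_cycleWeight {a : ℝ} (ha : a ≤ 1) {θ : Fin n → ℝ}
    (hθ : θ ∈ Set.univ.pi fun _ => Set.Icc 0 1) :
    ((finalSet (cycleWeight n (1 - a)) θ fun _ => a).card : ℝ) =
      (Set.univ.pi fun _ => Set.Ioi a)ᶜ.indicator (fun _ => (n : ℝ)) θ := by
  by_cases hall : θ ∈ Set.univ.pi fun _ => Set.Ioi a
  · rw [finalSet_eq_empty _ _ _ fun v => hall v trivial,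
      Set.indicator_of_notMem (Set.notMem_compl_iff.2 hall)]
    simp
  · obtain ⟨v₀, -, hv₀⟩ : ∃ v₀ ∈ Set.univ, ¬ a < θ v₀ := by simpa [Set.mem_pi] using hall
    have hwt : ∀ u v, 0 ≤ cycleWeight n (1 - a) u v := fun u v => by
      unfold cycleWeight; split_ifs <;> linarith
    have hnext : ∀ v, θ (v + 1) ≤ cycleWeight n (1 - a) v (v + 1) + a := fun v => by
      simp only [cycleWeight, Fin.val_add_one_eq_mod, if_true, sub_add_cancel]
      exact (hθ (v + 1) trivial).2
    rw [finalSet_eq_univ_of_chain _ _ _ (· + 1) hwt hnext (not_lt.1 hv₀)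
      (by simpa using Fin.exists_iterate_add_one_eq v₀), Set.indicator_of_mem hall]
    simp

end Cycle

section UniformThresholds

instance : IsProbabilityMeasure (volume.restrict (Set.Icc (0 : ℝ) 1)) := ⟨by simp⟩

variable {ι : Type*} [Fintype ι]

theorem measureReal_pi_Ioi_uniform {a : ℝ} (ha0 : 0 ≤ a) (ha1 : a ≤ 1) :
    (Measure.pi fun _ : ι => volume.restrict (Set.Icc (0 : ℝ) 1)).real
      (Set.univ.pi fun _ => Set.Ioi a) = (1 - a) ^ Fintype.card ι := by
  have hfactor : volume.restrict (Set.Icc (0 : ℝ) 1) (Set.Ioi a) = ENNReal.ofReal (1 - a) := by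
    rw [Measure.restrict_apply measurableSet_Ioi, ← Set.Ici_inter_Iic, ← Set.inter_assoc,
      Set.inter_eq_left.2 (Set.Ioi_subset_Ici ha0), Set.Ioi_inter_Iic, Real.volume_Ioc]
  rw [measureReal_def, Measure.pi_pi, hfactor, prod_const, card_univ, ENNReal.toReal_pow,
    ENNReal.toReal_ofReal (by linarith)]

theorem ae_mem_pi_Icc_uniform :
    ∀ᵐ θ ∂(Measure.pi fun _ : ι => volume.restrict (Set.Icc (0 : ℝ) 1)),
      θ ∈ Set.univ.pi fun _ => Set.Icc 0 1 := by
  rw [← Measure.restrict_pi_pi, ← volume_pi]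
  exact ae_restrict_mem (MeasurableSet.univ_pi fun _ => measurableSet_Icc)

end UniformThresholds

/-- On the directed cycle on `n` vertices with edge weights `1 - K/n` and i.i.d.
uniform thresholds, applying fractional influence `K/n` to every vertex activates
`n (1 - (1 - K/n)^n)` vertices in expectation. -/
theorem stmt7 (n : ℕ) (hn : 1 ≤ n) (K : ℝ) (hK0 : 0 < K) (hKn : K ≤ n) :
    let wt : Fin n → Fin n → ℝ :=
      fun u v => if ((u : ℕ) + 1) % n = (v : ℕ) then 1 - K / n else 0
    sigmaLin wt (fun _ => K / n) = n * (1 - (1 - K / n) ^ n) := by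
  intro wt
  have : NeZero n := ⟨by omega⟩
  have hn0 : (0 : ℝ) < n := by exact_mod_cast hn
  have ha0 : 0 ≤ K / n := by positivity
  have ha1 : K / n ≤ 1 := (div_le_one hn0).2 hKn
  have hIoi : MeasurableSet (Set.univ.pi fun _ : Fin n => Set.Ioi (K / n)) :=
    MeasurableSet.univ_pi fun _ => measurableSet_Ioi
  calc sigmaLin wt (fun _ => K / n)
      = ∫ θ, (Set.univ.pi fun _ => Set.Ioi (K / n))ᶜ.indicator (fun _ => (n : ℝ)) θ
          ∂(Measure.pi fun _ : Fin n => volume.restrict (Set.Icc 0 1)) :=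
        integral_congr_ae <| ae_mem_pi_Icc_uniform.mono fun θ hθ =>
          card_finalSet_cycleWeight ha1 hθ
    _ = n * (1 - (1 - K / n) ^ n) := by
        rw [integral_indicator_const _ hIoi.compl, probReal_compl_eq_one_sub hIoi,
          measureReal_pi_Ioi_uniform ha0 ha1, Fintype.card_fin, smul_eq_mul, mul_comm]
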